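/- Let f be μ-strongly convex and L-smooth on ℝ^n. Gradient descent with step γ = 1/L satisfies ‖x_{k+1} − x*‖ ≤ (1 − μ/L)·‖x_k − x*‖, where x* is the unique minimizer; hence the iterates converge linearly to x*. -/

import Mathlib

open Filter Set Topology

local notation "⟪" x ", " y "⟫" => @inner ℝ _ _ x y

section Helpers

variable {E : Type*} [NormedAddCommGroup E] [InnerProductSpace ℝ E] [CompleteSpace E]

/-- Derivative of a differentiable function along a line. -/
lemma gd_line_hasDerivAt (h : E → ℝ) (g : E → E) (hg : ∀ z, HasGradientAt h (g z) z)
    (x v : E) (t : ℝ) :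
    HasDerivAt (fun s : ℝ => h (x + s • v)) ⟪g (x + t • v), v⟫ t := by
  have hline : HasDerivAt (fun s : ℝ => x + s • v) v t := by
    simpa using ((hasDerivAt_id t).smul_const v).const_add x
  have := ((hasGradientAt_iff_hasFDerivAt.mp (hg (x + t • v)))).comp_hasDerivAt t hline
  simp only [InnerProductSpace.toDual_apply_apply] at this; exact this

/-- Gradient inequality for convex differentiable functions. -/
lemma gd_convex_grad_ineq (h : E → ℝ) (g : E → E) (hg : ∀ z, HasGradientAt h (g z) z)
    (hconv : ConvexOn ℝ Set.univ h) (x y : E) :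
    h x + ⟪g x, y - x⟫ ≤ h y := by
  set ψ : ℝ → ℝ := fun s => h (x + s • (y - x)) with hψ
  have hψ0 : ψ 0 = h x := by simp [hψ]
  have hd : HasDerivAt ψ ⟪g x, y - x⟫ 0 := by
    simpa using gd_line_hasDerivAt h g hg x (y - x) 0
  have hslope : Tendsto (slope ψ 0) (𝓝[>] 0) (𝓝 ⟪g x, y - x⟫) :=
    (hasDerivAt_iff_tendsto_slope.mp hd).mono_left
      (nhdsWithin_mono 0 (fun t ht => ne_of_gt ht))
  have hev : ∀ᶠ t in 𝓝[>] (0:ℝ), slope ψ 0 t ≤ h y - h x := by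
    filter_upwards [Ioc_mem_nhdsGT_of_mem (by constructor <;> norm_num : (0:ℝ) ∈ Ico 0 1)]
      with t ht
    have hcomb := hconv.2 (mem_univ x) (mem_univ y)
      (by linarith [ht.2] : (0:ℝ) ≤ 1 - t) ht.1.le (by ring)
    have hxt : x + t • (y - x) = (1 - t) • x + t • y := by
      rw [smul_sub, sub_smul, one_smul]; abel
    have hψt : ψ t ≤ (1 - t) * h x + t * h y := by
      rw [hψ]; dsimp only; rw [hxt]; exact hcomb
    rw [slope_def_field, sub_zero, div_le_iff₀ ht.1]
    rw [hψ0]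
    nlinarith [hψt]
  have := le_of_tendsto hslope hev
  linarith

/-- Descent lemma for functions with Lipschitz gradient. -/
lemma gd_descent_lemma (f : E → ℝ) (g : E → E) (hg : ∀ z, HasGradientAt f (g z) z)
    (L : ℝ) (hL : 0 ≤ L) (hlip : LipschitzWith (Real.toNNReal L) g) (x y : E) :
    f y ≤ f x + ⟪g x, y - x⟫ + L / 2 * ‖y - x‖ ^ 2 := by
  set v := y - x with hv
  set D : ℝ → ℝ := fun t => ⟪g (x + t • v), v⟫ with hD
  have hψ : ∀ t : ℝ, HasDerivAt (fun s => f (x + s • v)) (D t) t :=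
    fun t => gd_line_hasDerivAt f g hg x v t
  have hcont : Continuous D := by
    apply Continuous.inner
    · exact hlip.continuous.comp (by continuity)
    · exact continuous_const
  have hint : (∫ t in (0:ℝ)..1, D t) = f (x + (1:ℝ) • v) - f (x + (0:ℝ) • v) :=
    intervalIntegral.integral_eq_sub_of_hasDerivAt (fun t _ => hψ t)
      (hcont.intervalIntegrable 0 1)
  have hbound : ∀ t ∈ Icc (0:ℝ) 1, D t ≤ D 0 + (L * ‖v‖ ^ 2) * t := by
    intro t ht
    have h1 : D t - D 0 = ⟪g (x + t • v) - g (x + (0:ℝ) • v), v⟫ := by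
      rw [hD]; dsimp only; rw [inner_sub_left]
    have h2 : ⟪g (x + t • v) - g (x + (0:ℝ) • v), v⟫ ≤
        ‖g (x + t • v) - g (x + (0:ℝ) • v)‖ * ‖v‖ := real_inner_le_norm _ _
    have h3 : ‖g (x + t • v) - g (x + (0:ℝ) • v)‖ ≤ L * (t * ‖v‖) := by
      have := hlip.dist_le_mul (x + t • v) (x + (0:ℝ) • v)
      rw [dist_eq_norm, dist_eq_norm] at this
      have he : x + t • v - (x + (0:ℝ) • v) = t • v := by
        rw [zero_smul, add_zero]; abel
      rw [he] at this
      calc ‖g (x + t • v) - g (x + (0:ℝ) • v)‖ ≤ (Real.toNNReal L : ℝ) * ‖t • v‖ := this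
        _ = L * (t * ‖v‖) := by
            rw [Real.coe_toNNReal L hL, norm_smul, Real.norm_eq_abs, abs_of_nonneg ht.1]
    nlinarith [norm_nonneg v, ht.1, mul_le_mul_of_nonneg_right h3 (norm_nonneg v)]
  have hmono : (∫ t in (0:ℝ)..1, D t) ≤ ∫ t in (0:ℝ)..1, (D 0 + (L * ‖v‖ ^ 2) * t) := by
    apply intervalIntegral.integral_mono_on (by norm_num)
      (hcont.intervalIntegrable 0 1)
      ((continuous_const.add (continuous_const.mul continuous_id)).intervalIntegrable 0 1)
      hbound
  have hval : (∫ t in (0:ℝ)..1, (D 0 + (L * ‖v‖ ^ 2) * t)) = D 0 + L / 2 * ‖v‖ ^ 2 := by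
    have hci2 : Continuous (fun t : ℝ => (L * ‖v‖ ^ 2) * t) := by continuity
    rw [intervalIntegral.integral_add (intervalIntegrable_const)
      (hci2.intervalIntegrable 0 1),
      intervalIntegral.integral_const, intervalIntegral.integral_const_mul, integral_id]
    simp; ring
  have hD0 : D 0 = ⟪g x, y - x⟫ := by rw [hD]; dsimp only; rw [zero_smul, add_zero]
  have h1 : f (x + (1:ℝ) • v) = f y := by rw [one_smul, hv]; congr 1; abel
  have h0 : f (x + (0:ℝ) • v) = f x := by rw [zero_smul, add_zero]
  rw [h1, h0] at hint
  rw [← hD0]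
  linarith [hmono.trans_eq hval, hint]

/-- Cocoercivity of the gradient of a convex function satisfying a descent inequality. -/
lemma gd_cocoercive (h : E → ℝ) (g : E → E) (hg : ∀ z, HasGradientAt h (g z) z)
    (hconv : ConvexOn ℝ Set.univ h) (C : ℝ) (hC : 0 ≤ C)
    (hdes : ∀ x y, h y ≤ h x + ⟪g x, y - x⟫ + C / 2 * ‖y - x‖ ^ 2)
    (x y : E) : ‖g x - g y‖ ^ 2 ≤ C * ⟪g x - g y, x - y⟫ := by
  set Δ := g x - g y with hΔ
  have key : ∀ t : ℝ, 2 * t * ‖Δ‖ ^ 2 - C * t ^ 2 * ‖Δ‖ ^ 2 ≤ ⟪Δ, x - y⟫ := by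
    intro t
    have h1 := gd_convex_grad_ineq h g hg hconv x (y + t • Δ)
    have h2 := hdes y (y + t • Δ)
    have h3 := gd_convex_grad_ineq h g hg hconv y (x - t • Δ)
    have h4 := hdes x (x - t • Δ)
    have e1 : y + t • Δ - x = (y - x) + t • Δ := by abel
    have e2 : y + t • Δ - y = t • Δ := by abel
    have e3 : x - t • Δ - y = (x - y) - t • Δ := by abel
    have e4 : x - t • Δ - x = -(t • Δ) := by abel
    rw [e1] at h1
    rw [e2] at h2
    rw [e3] at h3
    rw [e4] at h4
    have hn : ‖t • Δ‖ ^ 2 = t ^ 2 * ‖Δ‖ ^ 2 := by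
      rw [norm_smul, Real.norm_eq_abs, mul_pow, sq_abs]
    have hnn : ‖-(t • Δ)‖ ^ 2 = t ^ 2 * ‖Δ‖ ^ 2 := by rw [norm_neg]; exact hn
    rw [inner_add_right, real_inner_smul_right] at h1
    rw [real_inner_smul_right] at h2
    rw [inner_sub_right, real_inner_smul_right] at h3
    rw [inner_neg_right, real_inner_smul_right] at h4
    rw [hn] at h2
    rw [hnn] at h4
    have hgx : ⟪g x, Δ⟫ - ⟪g y, Δ⟫ = ‖Δ‖ ^ 2 := by
      rw [← inner_sub_left, ← hΔ, real_inner_self_eq_norm_sq]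
    have hsym : ⟪g x, y - x⟫ + ⟪g y, x - y⟫ = -⟪Δ, x - y⟫ := by
      have : ⟪g y, x - y⟫ - ⟪g x, x - y⟫ = -⟪Δ, x - y⟫ := by
        rw [← inner_sub_left]
        rw [show g y - g x = -Δ by rw [hΔ]; abel, inner_neg_left]
      have hyx : ⟪g x, y - x⟫ = -⟪g x, x - y⟫ := by
        rw [show y - x = -(x - y) by abel, inner_neg_right]
      linarith [this, hyx]
    have hgxt : t * inner ℝ (g x) Δ - t * inner ℝ (g y) Δ = t * ‖Δ‖ ^ 2 := by
      rw [← mul_sub, hgx]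
    linarith [h1.trans h2, h3.trans h4, hgxt, hsym]
  rcases eq_or_lt_of_le hC with hC0 | hCpos
  · -- C = 0
    rw [← hC0]
    rw [← hC0] at key
    simp only [zero_mul, sub_zero] at key ⊢
    by_contra hpos
    push_neg at hpos
    set P := ⟪Δ, x - y⟫ with hP
    have hkey := key ((P + 1) / (2 * ‖Δ‖ ^ 2))
    have heq : 2 * ((P + 1) / (2 * ‖Δ‖ ^ 2)) * ‖Δ‖ ^ 2 = P + 1 := by
      calc 2 * ((P + 1) / (2 * ‖Δ‖ ^ 2)) * ‖Δ‖ ^ 2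
          = (P + 1) * ((2 * ‖Δ‖ ^ 2) / (2 * ‖Δ‖ ^ 2)) := by ring
        _ = P + 1 := by rw [div_self (mul_pos two_pos hpos).ne', mul_one]
    rw [heq] at hkey
    linarith
  · have := key (1 / C)
    have hC2 : C ≠ 0 := ne_of_gt hCpos
    have h1 : 2 * (1 / C) * ‖Δ‖ ^ 2 - C * (1 / C) ^ 2 * ‖Δ‖ ^ 2 = (1 / C) * ‖Δ‖ ^ 2 := by
      field_simp; ring
    rw [h1] at this
    calc ‖Δ‖ ^ 2 = C * ((1 / C) * ‖Δ‖ ^ 2) := by field_simp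
      _ ≤ C * ⟪Δ, x - y⟫ := by
          exact mul_le_mul_of_nonneg_left this hCpos.le

end Helpers

/-- Linear convergence of gradient descent with step `1/L` for a `μ`-strongly convex,
`L`-smooth function: `‖x_{k+1} − x*‖ ≤ (1 − μ/L)‖x_k − x*‖`. -/
theorem gd_strongly_convex_linear_rate {n : ℕ} (f : EuclideanSpace ℝ (Fin n) → ℝ)
    (f' : EuclideanSpace ℝ (Fin n) → EuclideanSpace ℝ (Fin n))
    (hdiff : ∀ x, HasGradientAt f (f' x) x)
    (μ L : ℝ) (hμ : 0 < μ) (hμL : μ ≤ L)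
    (hsconv : ConvexOn ℝ Set.univ (fun x => f x - μ/2 * ‖x‖^2))
    (hlip : LipschitzWith (Real.toNNReal L) f')
    (x : ℕ → EuclideanSpace ℝ (Fin n))
    (hiter : ∀ k, x (k+1) = x k - (1/L) • f' (x k))
    (xstar : EuclideanSpace ℝ (Fin n)) (hmin : ∀ y, f xstar ≤ f y) :
    ∀ k : ℕ, ‖x (k+1) - xstar‖ ≤ (1 - μ/L) * ‖x k - xstar‖ := by
  intro k
  have hL : 0 < L := hμ.trans_le hμL
  set h : EuclideanSpace ℝ (Fin n) → ℝ := fun w => f w - μ/2 * ‖w‖^2 with hh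
  set g : EuclideanSpace ℝ (Fin n) → EuclideanSpace ℝ (Fin n) := fun z => f' z - μ • z
    with hgdef
  -- gradient of h
  have hgrad : ∀ z, HasGradientAt h (g z) z := by
    intro z
    rw [hasGradientAt_iff_hasFDerivAt]
    have h2 : HasFDerivAt (fun w : EuclideanSpace ℝ (Fin n) => μ/2 * ‖w‖^2)
        ((InnerProductSpace.toDual ℝ (EuclideanSpace ℝ (Fin n))) (μ • z)) z := by
      have h3 := (hasFDerivAt_id z).norm_sq
      have h4 := h3.const_mul (μ/2)
      refine h4.congr_fderiv ?_
      ext w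
      simp [InnerProductSpace.toDual_apply_apply, real_inner_smul_left]
      ring
    have h1 := hasGradientAt_iff_hasFDerivAt.mp (hdiff z)
    have h5 := h1.sub h2
    rw [hgdef]
    simp only [map_sub]; exact h5
  -- descent lemma for f and for h
  have hdesf := gd_descent_lemma f f' hdiff L hL.le hlip
  have hdesh : ∀ a b, h b ≤ h a + ⟪g a, b - a⟫ + (L - μ)/2 * ‖b - a‖^2 := by
    intro a b
    have hid : ‖b‖^2 = ‖a‖^2 + 2*⟪a, b - a⟫ + ‖b - a‖^2 := by
      have h6 := norm_add_sq_real a (b - a)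
      rw [show a + (b - a) = b by abel] at h6
      linarith
    have hgain : ⟪g a, b - a⟫ = ⟪f' a, b - a⟫ - μ * ⟪a, b - a⟫ := by
      rw [hgdef]; dsimp only; rw [inner_sub_left, real_inner_smul_left]
    have h7 := hdesf a b
    have hidm : μ/2 * ‖b‖^2 = μ/2 * (‖a‖^2 + 2*⟪a, b - a⟫ + ‖b - a‖^2) := by rw [hid]
    rw [hh]; dsimp only
    rw [hgain]
    linarith [hidm]
  -- cocoercivity
  have hcoco := gd_cocoercive h g hgrad hsconv (L - μ) (by linarith) hdesh (x k) xstar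
  -- gradient at the minimizer vanishes
  have hf0 : f' xstar = 0 := by
    have hloc : IsLocalMin f xstar := Filter.Eventually.of_forall hmin
    have h0 := hloc.hasFDerivAt_eq_zero (hasGradientAt_iff_hasFDerivAt.mp (hdiff xstar))
    exact (LinearIsometryEquiv.map_eq_zero_iff _).mp h0
  -- algebraic identity for the iterate
  have hΔd : g (x k) - g xstar = f' (x k) - μ • (x k - xstar) := by
    rw [hgdef]; dsimp only; rw [hf0]
    module
  have hx1 : x (k+1) - xstar
      = (1 - μ/L) • (x k - xstar) - (1/L) • (g (x k) - g xstar) := by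
    rw [hiter k, hΔd]
    have hLne : L ≠ 0 := ne_of_gt hL
    match_scalars <;> field_simp <;> ring
  set Δ := g (x k) - g xstar with hΔ
  set d := x k - xstar with hd
  -- cocoercivity in convenient form
  have hcoco' : ‖Δ‖^2 ≤ (L - μ) * ⟪Δ, d⟫ := hcoco
  have hP : 0 ≤ (L - μ) * ⟪Δ, d⟫ := le_trans (sq_nonneg _) hcoco'
  have h2N : ‖Δ‖^2 ≤ 2*(L - μ)*⟪Δ, d⟫ := by linarith
  -- expand the squared norm
  have hnorm : ‖x (k+1) - xstar‖^2
      = (1 - μ/L)^2 * ‖d‖^2 - 2*((1 - μ/L)*(1/L))*⟪d, Δ⟫ + (1/L)^2*‖Δ‖^2 := by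
    rw [hx1, norm_sub_sq_real, norm_smul, norm_smul, real_inner_smul_left,
      real_inner_smul_right]
    simp only [Real.norm_eq_abs, mul_pow, sq_abs]
    ring
  have hcomm : ⟪d, Δ⟫ = ⟪Δ, d⟫ := real_inner_comm _ _
  have hsq : ‖x (k+1) - xstar‖^2 ≤ ((1 - μ/L) * ‖d‖)^2 := by
    rw [hnorm, mul_pow, hcomm]
    have hkey : (1/L)^2*‖Δ‖^2 ≤ (1/L)^2 * (2*(L - μ)*⟪Δ, d⟫) :=
      mul_le_mul_of_nonneg_left h2N (by positivity)
    have heq : 2*((1 - μ/L)*(1/L))*⟪Δ, d⟫ = (1/L)^2 * (2*(L - μ)*⟪Δ, d⟫) := by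
      have h9 : 1 - μ/L = (L - μ) * (1/L) := by field_simp
      rw [h9]
      ring
    linarith
  have hμLle : μ/L ≤ 1 := (div_le_one hL).mpr hμL
  have hb : 0 ≤ (1 - μ/L) * ‖d‖ := mul_nonneg (by linarith) (norm_nonneg _)
  have hfin := Real.sqrt_le_sqrt hsq
  rwa [Real.sqrt_sq (norm_nonneg _), Real.sqrt_sq hb] at hfin
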